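/- The Robin model ℋ_R(X, ξ, ξ') = −(κ/(2√π))·exp(−X²/4)·erfc((ξ+ξ')/2), with κ a real constant, satisfies the model equation (−∂²_{XX} − (X/2)∂_X − ∂²_{ξξ} − (ξ/2)∂_ξ − (ξ'/2)∂_{ξ'} − 1/2)ℋ_R = 0 for all real X, ξ, ξ'. -/

import Mathlib

/-!
Separation of variables: `ℋ_R = c · A(X) · B(ξ, ξ')` with `A(X) = exp(−X²/4)` and
`B(ξ, ξ') = erfc((ξ + ξ')/2)`. The Gaussian satisfies `−A'' − (X/2)A' = A/2`, which cancels the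
zeroth-order term `−ℋ_R/2`. Since `∂_ξ B = ∂_ξ' B = erfc'/2` and `erfc'' = −2z·erfc'`, the
`(ξ, ξ')`-part of the operator annihilates `B`.
-/

open Real

noncomputable def erfc (z : ℝ) : ℝ :=
  (2 / Real.sqrt π) * ∫ s in Set.Ioi z, Real.exp (-s ^ 2)

open MeasureTheory Set

theorem hasDerivAt_integral_Ioi {E : Type*} [NormedAddCommGroup E] [NormedSpace ℝ E]
    [CompleteSpace E] {f : ℝ → E} (hf : Integrable f) (hfc : Continuous f) (z : ℝ) :
    HasDerivAt (fun u => ∫ x in Ioi u, f x) (-f z) z := by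
  have hsplit : (fun u => ∫ x in Ioi u, f x) = fun u => (∫ x in u..0, f x) + ∫ x in Ioi 0, f x :=
    funext fun u => (intervalIntegral.integral_interval_add_Ioi hf.integrableOn hf.integrableOn).symm
  rw [hsplit]
  exact (intervalIntegral.integral_hasDerivAt_left (hfc.intervalIntegrable _ _)
    hfc.aestronglyMeasurable.stronglyMeasurableAtFilter hfc.continuousAt).add_const _

theorem hasDerivAt_erfc (z : ℝ) : HasDerivAt erfc (-(2 / √π) * exp (-z ^ 2)) z := by
  have hint : Integrable fun s : ℝ => exp (-s ^ 2) := by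
    simpa using integrable_exp_neg_mul_sq one_pos
  exact ((hasDerivAt_integral_Ioi hint (by fun_prop) z).const_mul (2 / √π)).congr_deriv (by ring)

theorem differentiable_erfc : Differentiable ℝ erfc := fun z => (hasDerivAt_erfc z).differentiableAt

theorem deriv_erfc : deriv erfc = fun z => -(2 / √π) * exp (-z ^ 2) :=
  funext fun z => (hasDerivAt_erfc z).deriv

theorem hasDerivAt_deriv_erfc (z : ℝ) : HasDerivAt (deriv erfc) (-2 * z * deriv erfc z) z := by
  rw [deriv_erfc]
  have hsq : HasDerivAt (fun z : ℝ => -z ^ 2) (-(2 * z)) z :=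
    (hasDerivAt_pow 2 z).fun_neg.congr_deriv (by norm_num)
  exact (hsq.exp.const_mul (-(2 / √π))).congr_deriv (by ring)

theorem deriv_comp_add_div_two {g : ℝ → ℝ} (hg : Differentiable ℝ g) (a : ℝ) :
    deriv (fun v => g ((v + a) / 2)) = fun v => deriv g ((v + a) / 2) / 2 := by
  funext v
  have hlin : HasDerivAt (fun v : ℝ => (v + a) / 2) (1 / 2) v :=
    ((hasDerivAt_id v).add_const a).div_const 2
  exact ((hg _).hasDerivAt.comp v hlin).deriv.trans (mul_one_div _ _)

theorem deriv_comp_const_add_div_two {g : ℝ → ℝ} (hg : Differentiable ℝ g) (a : ℝ) :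
    deriv (fun w => g ((a + w) / 2)) = fun w => deriv g ((a + w) / 2) / 2 := by
  simp only [add_comm a]
  exact deriv_comp_add_div_two hg a

theorem comp_half_sum_model_equation {g : ℝ → ℝ} (hg : Differentiable ℝ g)
    (hg' : ∀ s, HasDerivAt (deriv g) (-2 * s * deriv g s) s) (v w : ℝ) :
    -deriv (deriv fun v => g ((v + w) / 2)) v - v / 2 * deriv (fun v => g ((v + w) / 2)) v -
      w / 2 * deriv (fun w => g ((v + w) / 2)) w = 0 := by
  have hg'' : Differentiable ℝ (deriv g) := fun s => (hg' s).differentiableAt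
  rw [deriv_comp_add_div_two hg, deriv_div_const, deriv_comp_add_div_two hg'',
    deriv_comp_const_add_div_two hg]
  beta_reduce
  rw [(hg' _).deriv]
  ring

theorem hasDerivAt_exp_neg_sq_div_four (x : ℝ) :
    HasDerivAt (fun x => exp (-x ^ 2 / 4)) (-(x / 2) * exp (-x ^ 2 / 4)) x := by
  have hsq : HasDerivAt (fun x : ℝ => -x ^ 2 / 4) (-(x / 2)) x :=
    (hasDerivAt_pow 2 x).fun_neg.div_const 4 |>.congr_deriv (by ring)
  exact hsq.exp.congr_deriv (mul_comm _ _)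

theorem deriv_exp_neg_sq_div_four :
    deriv (fun x => exp (-x ^ 2 / 4)) = fun x => -(x / 2) * exp (-x ^ 2 / 4) :=
  funext fun x => (hasDerivAt_exp_neg_sq_div_four x).deriv

theorem exp_neg_sq_div_four_model_equation (x : ℝ) :
    -deriv (deriv fun x => exp (-x ^ 2 / 4)) x - x / 2 * deriv (fun x => exp (-x ^ 2 / 4)) x =
      exp (-x ^ 2 / 4) / 2 := by
  have h : HasDerivAt (fun x => -(x / 2) * exp (-x ^ 2 / 4))
      ((x ^ 2 / 4 - 1 / 2) * exp (-x ^ 2 / 4)) x :=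
    (((hasDerivAt_id' x).div_const 2).fun_neg.mul (hasDerivAt_exp_neg_sq_div_four x)).congr_deriv
      (by ring)
  rw [deriv_exp_neg_sq_div_four, h.deriv]
  ring

/-- The Robin model `ℋ_R(X,ξ,ξ') = −(κ/(2√π))·exp(−X²/4)·erfc((ξ+ξ')/2)`
satisfies the model equation
`(−∂²_{XX} − (X/2)∂_X − ∂²_{ξξ} − (ξ/2)∂_ξ − (ξ'/2)∂_{ξ'} − 1/2)ℋ_R = 0`
for all real `X, ξ, ξ'`. -/
theorem robin_model_equation (κ : ℝ) :
    let F : ℝ → ℝ → ℝ → ℝ := fun X ξ ξ' =>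
      -(κ / (2 * Real.sqrt π)) * Real.exp (-X ^ 2 / 4) * erfc ((ξ + ξ') / 2)
    ∀ X ξ ξ' : ℝ,
      -(deriv (deriv (fun u => F u ξ ξ')) X) - X / 2 * deriv (fun u => F u ξ ξ') X -
        deriv (deriv (fun v => F X v ξ')) ξ - ξ / 2 * deriv (fun v => F X v ξ') ξ -
        ξ' / 2 * deriv (fun w => F X ξ w) ξ' - (1 / 2) * F X ξ ξ' = 0 := by
  intro F X ξ ξ'
  simp only [F, deriv_mul_const_field', deriv_const_mul_field']
  linear_combination
    (-(κ / (2 * √π)) * erfc ((ξ + ξ') / 2)) * exp_neg_sq_div_four_model_equation X +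
    (-(κ / (2 * √π)) * exp (-X ^ 2 / 4)) *
      comp_half_sum_model_equation differentiable_erfc hasDerivAt_deriv_erfc ξ ξ'
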